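/- arXiv:2004.06768 — 2 statements merged into one kernel-verified Lean document; each statement's English description precedes it below -/
import Mathlib

section
/- The number of subgroups of order d in the group (ℤ/d) × (ℤ/d) is σ₁(d). -/
/-!
A subgroup `L ≤ (ℤ/d)²` is determined by its projection `π(L)` to the first factor, its
intersection `K(L)` with the second factor, and one element of `L` over a generator of `π(L)`.
Subgroups of `ℤ/d` are the cyclic groups `⟨a⟩` with `a ∣ d`, and `|L| = |π(L)| |K(L)|`; so if
`|L| = d` then `π(L) = ⟨a⟩` and `K(L) = ⟨c⟩` with `a c = d`, and `L` is generated by `(a, b)` and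
`(0, c)` for a unique `0 ≤ b < c` (the Hermite normal form). Hence the number of such `L` is
`∑_{a c = d} c = σ₁(d)`.
-/

open AddSubgroup

namespace AddSubgroup

variable {G H : Type*} [AddGroup G] [AddGroup H]

theorem card_eq_card_map_fst_mul_card_comap_inr (L : AddSubgroup (G × H)) :
    Nat.card L =
      Nat.card (L.map (AddMonoidHom.fst G H)) * Nat.card (L.comap (AddMonoidHom.inr G H)) := by
  let f := (AddMonoidHom.fst G H).comp L.subtype
  let e : f.ker ≃ L.comap (AddMonoidHom.inr G H) :=
    { toFun x := ⟨x.1.1.2, by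
        obtain ⟨⟨⟨x₁, x₂⟩, hx⟩, hx₁ : x₁ = 0⟩ := x
        subst hx₁
        exact hx⟩
      invFun y := ⟨⟨(0, y), y.2⟩, rfl⟩
      left_inv := by
        rintro ⟨⟨⟨x₁, x₂⟩, hx⟩, hx₁ : x₁ = 0⟩
        subst hx₁
        rfl
      right_inv _ := rfl }
  rw [← f.ker.card_mul_index, index_ker, AddMonoidHom.range_comp, range_subtype,
    Nat.card_congr e, mul_comm]

end AddSubgroup

namespace ZMod

theorem exists_dvd_eq_zmultiples {d : ℕ} (H : AddSubgroup (ZMod d)) :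
    ∃ a, a ∣ d ∧ H = zmultiples (a : ZMod d) := by
  obtain ⟨a, ha⟩ := Int.subgroup_cyclic (H.comap (Int.castAddHom (ZMod d)))
  rw [← zmultiples_eq_closure, ← Int.zmultiples_natAbs] at ha
  refine ⟨a.natAbs, ?_, ?_⟩
  · have : (d : ℤ) ∈ H.comap (Int.castAddHom (ZMod d)) := by simp
    rw [ha, Int.mem_zmultiples_iff] at this
    exact_mod_cast this
  · rw [← map_comap_eq_self_of_surjective (f := Int.castAddHom (ZMod d)) intCast_surjective H,
      ha, AddMonoidHom.map_zmultiples]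
    simp

theorem addOrderOf_natCast_of_mul_eq {a c d : ℕ} (ha : a ≠ 0) (h : a * c = d) :
    addOrderOf (a : ZMod d) = c := by
  rw [addOrderOf_coe' d ha, ← h, Nat.gcd_mul_right_left,
    Nat.mul_div_cancel_left _ (Nat.pos_of_ne_zero ha)]

theorem eq_zmultiples_of_card_mul_eq {a d : ℕ} [NeZero d] {H : AddSubgroup (ZMod d)}
    (h : Nat.card H * a = d) : H = zmultiples (a : ZMod d) := by
  obtain ⟨a', ⟨c, hc⟩, rfl⟩ := exists_dvd_eq_zmultiples H
  rw [Nat.card_zmultiples, addOrderOf_natCast_of_mul_eq (left_ne_zero_of_mul (hc ▸ NeZero.ne d))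
    hc.symm] at h
  have hc0 : 0 < c := Nat.pos_of_ne_zero (left_ne_zero_of_mul (h ▸ NeZero.ne d))
  rw [Nat.eq_of_mul_eq_mul_left hc0 (h.trans (hc.trans (mul_comm a' c)))]

/-- The image in `(ℤ/d)²` of the lattice spanned by the rows `(a, b)`, `(0, c)` of a matrix in
Hermite normal form. -/
def hermiteSubgroup (d a b c : ℕ) : AddSubgroup (ZMod d × ZMod d) :=
  zmultiples ((a : ZMod d), (b : ZMod d)) ⊔ zmultiples ((0 : ZMod d), (c : ZMod d))

variable {d a b c : ℕ}

theorem mem_hermiteSubgroup {p : ZMod d × ZMod d} :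
    p ∈ hermiteSubgroup d a b c ↔
      ∃ m n : ℤ, m • ((a : ZMod d), (b : ZMod d)) + n • ((0 : ZMod d), (c : ZMod d)) = p := by
  simp only [hermiteSubgroup, mem_sup, mem_zmultiples_iff]
  constructor
  · rintro ⟨_, ⟨m, rfl⟩, _, ⟨n, rfl⟩, rfl⟩
    exact ⟨m, n, rfl⟩
  · rintro ⟨m, n, rfl⟩
    exact ⟨_, ⟨m, rfl⟩, _, ⟨n, rfl⟩, rfl⟩

theorem map_fst_hermiteSubgroup :
    (hermiteSubgroup d a b c).map (AddMonoidHom.fst _ _) = zmultiples (a : ZMod d) := by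
  simp [hermiteSubgroup, AddSubgroup.map_sup, AddMonoidHom.map_zmultiples]

theorem comap_inr_hermiteSubgroup (ha : a ≠ 0) (h : a * c = d) :
    (hermiteSubgroup d a b c).comap (AddMonoidHom.inr _ _) = zmultiples (c : ZMod d) := by
  ext y
  simp only [mem_comap, AddMonoidHom.inr_apply, mem_hermiteSubgroup, mem_zmultiples_iff]
  constructor
  · rintro ⟨m, n, hmn⟩
    simp only [Prod.smul_mk, Prod.mk_add_mk, smul_zero, add_zero, Prod.mk.injEq] at hmn
    obtain ⟨k, rfl⟩ : (c : ℤ) ∣ m := by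
      rw [← addOrderOf_natCast_of_mul_eq ha h, addOrderOf_dvd_iff_zsmul_eq_zero]
      exact hmn.1
    refine ⟨k * b + n, ?_⟩
    rw [← hmn.2]
    simp only [zsmul_eq_mul]
    push_cast
    ring
  · rintro ⟨n, rfl⟩
    exact ⟨0, n, by simp⟩

theorem card_hermiteSubgroup [NeZero d] (h : a * c = d) :
    Nat.card (hermiteSubgroup d a b c) = d := by
  have ha : a ≠ 0 := left_ne_zero_of_mul (h ▸ NeZero.ne d)
  have hc : c ≠ 0 := right_ne_zero_of_mul (h ▸ NeZero.ne d)
  rw [card_eq_card_map_fst_mul_card_comap_inr, map_fst_hermiteSubgroup,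
    comap_inr_hermiteSubgroup ha h, Nat.card_zmultiples, Nat.card_zmultiples,
    addOrderOf_natCast_of_mul_eq ha h, addOrderOf_natCast_of_mul_eq hc ((mul_comm c a).trans h),
    mul_comm, h]

theorem eq_of_hermiteSubgroup_eq [NeZero d] {a' b' c' : ℕ} (h : a * c = d) (h' : a' * c' = d)
    (hb : b < c) (hb' : b' < c')
    (hH : hermiteSubgroup d a b c = hermiteSubgroup d a' b' c') : a = a' ∧ c = c' ∧ b = b' := by
  have ha : a ≠ 0 := left_ne_zero_of_mul (h ▸ NeZero.ne d)
  have ha' : a' ≠ 0 := left_ne_zero_of_mul (h' ▸ NeZero.ne d)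
  obtain rfl : c = c' := by
    have := congrArg (fun H ↦ Nat.card (H.map (AddMonoidHom.fst (ZMod d) (ZMod d)))) hH
    simpa only [map_fst_hermiteSubgroup, Nat.card_zmultiples, addOrderOf_natCast_of_mul_eq ha h,
      addOrderOf_natCast_of_mul_eq ha' h'] using this
  obtain rfl : a = a' := Nat.eq_of_mul_eq_mul_right (by omega) (h.trans h'.symm)
  refine ⟨rfl, rfl, ?_⟩
  have hmem : (b' : ZMod d) - b ∈ zmultiples (c : ZMod d) := by
    rw [← comap_inr_hermiteSubgroup (b := b) ha h, mem_comap]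
    have hab : ((a : ZMod d), (b : ZMod d)) ∈ hermiteSubgroup d a b c :=
      mem_sup_left (mem_zmultiples _)
    have hab' : ((a : ZMod d), (b' : ZMod d)) ∈ hermiteSubgroup d a b c :=
      hH ▸ mem_sup_left (mem_zmultiples _)
    simpa using sub_mem hab' hab
  obtain ⟨n, hn⟩ := mem_zmultiples_iff.mp hmem
  have hbb' := congrArg (castHom (Dvd.intro_left a h) (ZMod c)) hn
  rw [map_zsmul, map_sub, map_natCast, map_natCast, map_natCast, natCast_self, smul_zero,
    eq_comm, sub_eq_zero, natCast_eq_natCast_iff'] at hbb'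
  exact (Nat.mod_eq_of_lt hb).symm.trans (hbb'.symm.trans (Nat.mod_eq_of_lt hb'))

theorem exists_eq_hermiteSubgroup [NeZero d] (L : AddSubgroup (ZMod d × ZMod d))
    (hL : Nat.card L = d) : ∃ a b c, a * c = d ∧ b < c ∧ L = hermiteSubgroup d a b c := by
  set c := Nat.card (L.map (AddMonoidHom.fst _ _))
  set a := Nat.card (L.comap (AddMonoidHom.inr _ _))
  have hca : c * a = d := by rw [← hL, card_eq_card_map_fst_mul_card_comap_inr]
  have hac : a * c = d := (mul_comm a c).trans hca
  obtain ⟨⟨x, y⟩, hxy, rfl : x = a⟩ : (a : ZMod d) ∈ L.map (AddMonoidHom.fst _ _) := by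
    rw [eq_zmultiples_of_card_mul_eq hca]
    exact mem_zmultiples _
  have h0c : ((0 : ZMod d), (c : ZMod d)) ∈ L := by
    change (c : ZMod d) ∈ L.comap (AddMonoidHom.inr _ _)
    rw [eq_zmultiples_of_card_mul_eq hac]
    exact mem_zmultiples _
  have hy : ((y.val % c : ℕ) : ZMod d) + (y.val / c) • (c : ZMod d) = y := by
    rw [nsmul_eq_mul, ← Nat.cast_mul, ← Nat.cast_add, Nat.mod_add_div', natCast_zmod_val]
  have hab : ((a : ZMod d), ((y.val % c : ℕ) : ZMod d)) ∈ L := by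
    have : ((a : ZMod d), ((y.val % c : ℕ) : ZMod d)) =
        ((a : ZMod d), y) - (y.val / c) • ((0 : ZMod d), (c : ZMod d)) := by
      ext
      · simp
      · exact eq_sub_of_add_eq hy
    exact this ▸ sub_mem hxy (nsmul_mem h0c _)
  have hc : 0 < c := Nat.pos_of_ne_zero (left_ne_zero_of_mul (hca ▸ NeZero.ne d))
  refine ⟨a, y.val % c, c, hac, Nat.mod_lt _ hc, (eq_of_le_of_card_ge ?_ ?_).symm⟩
  · exact sup_le (zmultiples_le.mpr hab) (zmultiples_le.mpr h0c)
  · rw [hL, card_hermiteSubgroup hac]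

end ZMod

/-- The number of subgroups of order `d` in `(ℤ/d) × (ℤ/d)` is `σ₁(d)`. -/
theorem subgroup_count (d : ℕ) (hd : 0 < d) :
    Nat.card {L : AddSubgroup (ZMod d × ZMod d) // Nat.card L = d} =
      ∑ a ∈ d.divisors, a := by
  have : NeZero d := ⟨hd.ne'⟩
  let e : (Σ p : d.divisorsAntidiagonal, Fin p.1.2) →
      {L : AddSubgroup (ZMod d × ZMod d) // Nat.card L = d} := fun ⟨⟨(a, c), hac⟩, b⟩ ↦
    ⟨ZMod.hermiteSubgroup d a b c,
      ZMod.card_hermiteSubgroup (Nat.mem_divisorsAntidiagonal.mp hac).1⟩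
  have he : e.Bijective := by
    constructor
    · rintro ⟨⟨⟨a, c⟩, hac⟩, b⟩ ⟨⟨⟨a', c'⟩, hac'⟩, b'⟩ h
      obtain ⟨rfl, rfl, hb⟩ := ZMod.eq_of_hermiteSubgroup_eq
        (Nat.mem_divisorsAntidiagonal.mp hac).1 (Nat.mem_divisorsAntidiagonal.mp hac').1
        b.2 b'.2 (congrArg Subtype.val h)
      obtain rfl := Fin.ext hb
      rfl
    · rintro ⟨L, hL⟩
      obtain ⟨a, b, c, hac, hb, rfl⟩ := ZMod.exists_eq_hermiteSubgroup L hL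
      exact ⟨⟨⟨(a, c), Nat.mem_divisorsAntidiagonal.mpr ⟨hac, hd.ne'⟩⟩, ⟨b, hb⟩⟩, rfl⟩
  rw [← Nat.card_congr (Equiv.ofBijective e he), Nat.card_sigma]
  simp only [Nat.card_eq_fintype_card, Fintype.card_fin]
  rw [Finset.sum_coe_sort d.divisorsAntidiagonal (fun p ↦ p.2),
    Nat.sum_divisorsAntidiagonal' (fun _ c ↦ c)]
end

section
/- For every positive integer d, Σ_{d₁+d₂=d, d₁,d₂≥1} d₁·σ₁(d₁)σ₁(d₂) = (-d²/4 + d/24)·σ₁(d) + (5/24)·d·σ₃(d). -/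
/-!
Writing `d₁ = a x` and `d - d₁ = b y`, the left-hand side is `∑ a² x b` over the positive solutions
of `a x + b y = d`; averaging with the swap `(a, x) ↔ (b, y)` turns it into `(d / 2) ∑ a b`.
That sum is Besge's formula `∑ a b = ∑_{e ∣ d} ((5e³ + e) / 12 - d e / 2)`, proved by
Liouville's method: `(a, x, b, y) ↦ (b - a, y, a, x + y)` maps `{a < b}` bijectively onto
`{x < y}` and increases `a² - a b + b²` by `2 a b`, so `∑ a b` is reduced to the diagonals
`a = b` and `x = y`, where the sums are elementary.
-/

def sigmaQ (k n : ℕ) : ℚ := ∑ a ∈ n.divisors, (a : ℚ) ^ k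

open Finset

theorem sum_Ioo_zero_eq_sum_range {M : Type*} [AddCommMonoid M] (g : ℕ → M) (hg : g 0 = 0)
    (s : ℕ) : ∑ a ∈ Ioo 0 s, g a = ∑ a ∈ range s, g a := by
  rcases s.eq_zero_or_pos with rfl | hs
  · simp
  · rw [range_eq_Ico, ← Ioo_insert_left hs, sum_insert (by simp), hg, zero_add]

theorem sum_range_natCast (s : ℕ) : ∑ a ∈ range s, (a : ℚ) = s * (s - 1) / 2 := by
  induction s with
  | zero => simp
  | succ k ih => rw [sum_range_succ, ih]; push_cast; ring

theorem sum_range_natCast_sq (s : ℕ) :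
    ∑ a ∈ range s, (a : ℚ) ^ 2 = s * (s - 1) * (2 * s - 1) / 6 := by
  induction s with
  | zero => simp
  | succ k ih => rw [sum_range_succ, ih]; push_cast; ring

theorem sum_Ioo_sq_add_mul_sub_div_two (s : ℕ) :
    ∑ a ∈ Ioo 0 s, ((a : ℚ) ^ 2 + a * ((s - a : ℕ) : ℚ) / 2) =
      (s : ℚ) * (s - 1) * (5 * s - 1) / 12 := by
  rw [sum_Ioo_zero_eq_sum_range (fun a : ℕ => ((a : ℚ) ^ 2 + a * ((s - a : ℕ) : ℚ) / 2)) (by simp)]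
  have h : ∀ a ∈ range s,
      ((a : ℚ) ^ 2 + a * ((s - a : ℕ) : ℚ) / 2) = (a : ℚ) ^ 2 / 2 + s / 2 * a := by
    intro a ha
    rw [Nat.cast_sub (mem_range.mp ha).le]
    ring
  rw [sum_congr rfl h, sum_add_distrib, ← sum_div, ← mul_sum, sum_range_natCast,
    sum_range_natCast_sq]
  ring

theorem sum_divisorsAntidiagonal_fst_eq_sigmaQ (m : ℕ) :
    ∑ u ∈ m.divisorsAntidiagonal, (u.1 : ℚ) = sigmaQ 1 m := by
  simp only [Nat.sum_divisorsAntidiagonal fun i _ => (i : ℚ), sigmaQ, pow_one]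

theorem sum_divisorsAntidiagonal_sq_mul_eq_mul_sigmaQ (m : ℕ) :
    ∑ u ∈ m.divisorsAntidiagonal, (u.1 : ℚ) ^ 2 * u.2 = m * sigmaQ 1 m := by
  rw [← sum_divisorsAntidiagonal_fst_eq_sigmaQ, mul_sum]
  refine sum_congr rfl fun u hu => ?_
  rw [← (Nat.mem_divisorsAntidiagonal.mp hu).1]
  push_cast
  ring

def mulAddMulAntidiagonal (n : ℕ) : Finset ((ℕ × ℕ) × (ℕ × ℕ)) :=
  (Ioo 0 n).biUnion fun m => m.divisorsAntidiagonal ×ˢ (n - m).divisorsAntidiagonal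

theorem mem_mulAddMulAntidiagonal {n a x b y : ℕ} :
    ((a, x), (b, y)) ∈ mulAddMulAntidiagonal n ↔
      0 < a ∧ 0 < x ∧ 0 < b ∧ 0 < y ∧ a * x + b * y = n := by
  simp only [mulAddMulAntidiagonal, mem_biUnion, mem_Ioo, mem_product,
    Nat.mem_divisorsAntidiagonal, ← pos_iff_ne_zero]
  constructor
  · rintro ⟨m, ⟨hm, hmn⟩, ⟨rfl, -⟩, hby, -⟩
    obtain ⟨ha, hx⟩ := CanonicallyOrderedAdd.mul_pos.mp hm
    obtain ⟨hb, hy⟩ := CanonicallyOrderedAdd.mul_pos.mp (hby ▸ Nat.sub_pos_of_lt hmn)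
    exact ⟨ha, hx, hb, hy, by omega⟩
  · rintro ⟨ha, hx, hb, hy, rfl⟩
    have hax := Nat.mul_pos ha hx
    have hby := Nat.mul_pos hb hy
    exact ⟨a * x, ⟨hax, by omega⟩, ⟨rfl, by omega⟩, by omega, by omega⟩

namespace mulAddMulAntidiagonal

section

variable {M : Type*} [AddCommMonoid M] {n : ℕ}

theorem sum_eq_sum_sum_sum (f : (ℕ × ℕ) × (ℕ × ℕ) → M) :
    ∑ p ∈ mulAddMulAntidiagonal n, f p =
      ∑ m ∈ Ioo 0 n, ∑ u ∈ m.divisorsAntidiagonal, ∑ v ∈ (n - m).divisorsAntidiagonal,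
        f (u, v) := by
  rw [mulAddMulAntidiagonal, sum_biUnion]
  · simp_rw [sum_product]
  · intro m _ m' _ hmm'
    refine disjoint_left.mpr fun p hp hp' => hmm' ?_
    simp only [mem_product, Nat.mem_divisorsAntidiagonal] at hp hp'
    exact hp.1.1.symm.trans hp'.1.1

theorem sum_comp_of_involutive (e : (ℕ × ℕ) × (ℕ × ℕ) → (ℕ × ℕ) × (ℕ × ℕ))
    (he : Function.Involutive e)
    (hmem : ∀ p ∈ mulAddMulAntidiagonal n, e p ∈ mulAddMulAntidiagonal n)
    (f : (ℕ × ℕ) × (ℕ × ℕ) → M) :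
    ∑ p ∈ mulAddMulAntidiagonal n, f (e p) = ∑ p ∈ mulAddMulAntidiagonal n, f p :=
  sum_nbij' e e hmem hmem (fun p _ => he p) (fun p _ => he p) fun _ _ => rfl

theorem sum_filter_comp_of_involutive (e : (ℕ × ℕ) × (ℕ × ℕ) → (ℕ × ℕ) × (ℕ × ℕ))
    (he : Function.Involutive e)
    (hmem : ∀ p ∈ mulAddMulAntidiagonal n, e p ∈ mulAddMulAntidiagonal n)
    (P : (ℕ × ℕ) × (ℕ × ℕ) → Prop) [DecidablePred P] (f : (ℕ × ℕ) × (ℕ × ℕ) → M) :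
    ∑ p ∈ mulAddMulAntidiagonal n with P p, f p =
      ∑ p ∈ mulAddMulAntidiagonal n with P (e p), f (e p) := by
  simp only [sum_filter]
  exact (sum_comp_of_involutive e he hmem fun p => if P p then f p else 0).symm

theorem swap_mem {p : (ℕ × ℕ) × (ℕ × ℕ)} (hp : p ∈ mulAddMulAntidiagonal n) :
    p.swap ∈ mulAddMulAntidiagonal n := by
  obtain ⟨⟨a, x⟩, b, y⟩ := p
  simp only [Prod.swap_prod_mk, mem_mulAddMulAntidiagonal] at hp ⊢
  omega

theorem map_swap_mem {p : (ℕ × ℕ) × (ℕ × ℕ)} (hp : p ∈ mulAddMulAntidiagonal n) :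
    Prod.map Prod.swap Prod.swap p ∈ mulAddMulAntidiagonal n := by
  obtain ⟨⟨a, x⟩, b, y⟩ := p
  simp only [Prod.map, Prod.swap_prod_mk, mem_mulAddMulAntidiagonal] at hp ⊢
  rw [mul_comm x, mul_comm y]
  tauto

theorem sum_eq_sum_filter_lt_add_sum_filter_eq (g : ℕ × ℕ → ℕ) (f : (ℕ × ℕ) × (ℕ × ℕ) → M) :
    ∑ p ∈ mulAddMulAntidiagonal n, f p =
      ∑ p ∈ mulAddMulAntidiagonal n with g p.1 < g p.2, (f p + f p.swap) +
        ∑ p ∈ mulAddMulAntidiagonal n with g p.1 = g p.2, f p := by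
  have hgt : ∑ p ∈ mulAddMulAntidiagonal n with g p.2 < g p.1, f p =
      ∑ p ∈ mulAddMulAntidiagonal n with g p.1 < g p.2, f p.swap :=
    sum_filter_comp_of_involutive Prod.swap Prod.swap_swap (fun _ => swap_mem)
      (fun p => g p.2 < g p.1) f
  rw [sum_add_distrib, ← hgt]
  simp only [sum_filter, ← sum_add_distrib]
  refine sum_congr rfl fun p _ => ?_
  split_ifs <;> first | omega | simp

theorem sum_filter_fst_lt (f : (ℕ × ℕ) × (ℕ × ℕ) → M) :
    ∑ p ∈ mulAddMulAntidiagonal n with p.1.1 < p.2.1, f p =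
      ∑ p ∈ mulAddMulAntidiagonal n with p.1.2 < p.2.2,
        f ((p.2.1, p.2.2 - p.1.2), (p.1.1 + p.2.1, p.1.2)) := by
  refine (sum_nbij' (fun p => ((p.2.1, p.2.2 - p.1.2), (p.1.1 + p.2.1, p.1.2)))
    (fun p => ((p.2.1 - p.1.1, p.2.2), (p.1.1, p.1.2 + p.2.2))) ?_ ?_ ?_ ?_ fun _ _ => rfl).symm
  · rintro ⟨⟨a, x⟩, b, y⟩ hp
    simp only [mem_filter, mem_mulAddMulAntidiagonal] at hp ⊢
    obtain ⟨⟨ha, hx, hb, hy, rfl⟩, hxy⟩ := hp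
    obtain ⟨c, rfl⟩ := Nat.exists_eq_add_of_le hxy.le
    refine ⟨⟨hb, by omega, by omega, hx, ?_⟩, by omega⟩
    rw [Nat.add_sub_cancel_left]
    ring
  · rintro ⟨⟨a, x⟩, b, y⟩ hp
    simp only [mem_filter, mem_mulAddMulAntidiagonal] at hp ⊢
    obtain ⟨⟨ha, hx, hb, hy, rfl⟩, hab⟩ := hp
    obtain ⟨c, rfl⟩ := Nat.exists_eq_add_of_le hab.le
    refine ⟨⟨by omega, hy, ha, by omega, ?_⟩, by omega⟩
    rw [Nat.add_sub_cancel_left]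
    ring
  · rintro ⟨⟨a, x⟩, b, y⟩ hp
    simp only [mem_filter, mem_mulAddMulAntidiagonal] at hp
    simp only [Prod.mk.injEq, true_and, and_true]
    omega
  · rintro ⟨⟨a, x⟩, b, y⟩ hp
    simp only [mem_filter, mem_mulAddMulAntidiagonal] at hp
    simp only [Prod.mk.injEq, true_and, and_true]
    omega

theorem sum_filter_snd_eq (f : (ℕ × ℕ) × (ℕ × ℕ) → M) :
    ∑ p ∈ mulAddMulAntidiagonal n with p.1.2 = p.2.2, f p =
      ∑ u ∈ n.divisorsAntidiagonal, ∑ a ∈ Ioo 0 u.2, f ((a, u.1), (u.2 - a, u.1)) := by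
  rw [sum_sigma']
  refine sum_nbij' (fun p => ⟨(p.1.2, p.1.1 + p.2.1), p.1.1⟩)
    (fun w => ((w.2, w.1.1), (w.1.2 - w.2, w.1.1))) ?_ ?_ ?_ ?_ ?_
  · rintro ⟨⟨a, x⟩, b, y⟩ hp
    simp only [mem_filter, mem_mulAddMulAntidiagonal] at hp
    obtain ⟨⟨ha, hx, hb, hy, rfl⟩, rfl⟩ := hp
    simp only [mem_sigma, Nat.mem_divisorsAntidiagonal, mem_Ioo]
    refine ⟨⟨by ring, by positivity⟩, ha, by omega⟩
  · rintro ⟨⟨x, s⟩, a⟩ hw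
    simp only [mem_sigma, Nat.mem_divisorsAntidiagonal, mem_Ioo] at hw
    obtain ⟨⟨rfl, hn⟩, ha, has⟩ := hw
    simp only [mem_filter, mem_mulAddMulAntidiagonal, and_true]
    refine ⟨ha, Nat.pos_of_ne_zero (left_ne_zero_of_mul hn), by omega,
      Nat.pos_of_ne_zero (left_ne_zero_of_mul hn), ?_⟩
    rw [← add_mul, Nat.add_sub_cancel' has.le, mul_comm]
  · rintro ⟨⟨a, x⟩, b, y⟩ hp
    simp only [mem_filter, mem_mulAddMulAntidiagonal] at hp
    simp only [Prod.mk.injEq, true_and]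
    omega
  · rintro ⟨⟨x, s⟩, a⟩ hw
    simp only [mem_sigma, mem_Ioo] at hw
    simp only [Nat.add_sub_cancel' hw.2.2.le]
  · rintro ⟨⟨a, x⟩, b, y⟩ hp
    simp only [mem_filter, mem_mulAddMulAntidiagonal] at hp
    obtain ⟨-, rfl⟩ := hp
    simp only [Nat.add_sub_cancel_left]

theorem sum_filter_fst_eq (f : (ℕ × ℕ) × (ℕ × ℕ) → M) :
    ∑ p ∈ mulAddMulAntidiagonal n with p.1.1 = p.2.1, f p =
      ∑ u ∈ n.divisorsAntidiagonal, ∑ x ∈ Ioo 0 u.2, f ((u.1, x), (u.1, u.2 - x)) :=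
  (sum_filter_comp_of_involutive _ (fun _ => rfl) (fun _ => map_swap_mem) _ f).trans
    (sum_filter_snd_eq _)

theorem liouville_identity (f : (ℕ × ℕ) × (ℕ × ℕ) → M) :
    ∑ p ∈ mulAddMulAntidiagonal n with p.1.2 < p.2.2,
        (f ((p.2.1, p.2.2 - p.1.2), (p.1.1 + p.2.1, p.1.2)) +
          f ((p.1.1 + p.2.1, p.1.2), (p.2.1, p.2.2 - p.1.2))) +
      ∑ p ∈ mulAddMulAntidiagonal n with p.1.1 = p.2.1, f p =
    ∑ p ∈ mulAddMulAntidiagonal n with p.1.2 < p.2.2, (f p + f p.swap) +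
      ∑ p ∈ mulAddMulAntidiagonal n with p.1.2 = p.2.2, f p := by
  rw [← sum_eq_sum_filter_lt_add_sum_filter_eq Prod.snd,
    sum_eq_sum_filter_lt_add_sum_filter_eq Prod.fst, sum_filter_fst_lt]
  rfl

end

theorem sum_fst_fst_mul_snd_fst (n : ℕ) :
    ∑ p ∈ mulAddMulAntidiagonal n, (p.1.1 : ℚ) * p.2.1 =
      ∑ e ∈ n.divisors, ((5 * (e : ℚ) ^ 3 + e) / 12 - n * e / 2) := by
  -- `f p + f p.swap = a² - a b + b²`, which Liouville's bijection raises by `2 a b`.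
  let f : (ℕ × ℕ) × (ℕ × ℕ) → ℚ := fun p => (p.1.1 : ℚ) ^ 2 - p.1.1 * p.2.1 / 2
  have hsplit :=
    sum_eq_sum_filter_lt_add_sum_filter_eq (n := n) Prod.snd fun p => (p.1.1 : ℚ) * p.2.1
  have hliouville := liouville_identity (n := n) f
  have hcross : ∑ p ∈ mulAddMulAntidiagonal n with p.1.2 < p.2.2,
      (f ((p.2.1, p.2.2 - p.1.2), (p.1.1 + p.2.1, p.1.2)) +
        f ((p.1.1 + p.2.1, p.1.2), (p.2.1, p.2.2 - p.1.2))) =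
      ∑ p ∈ mulAddMulAntidiagonal n with p.1.2 < p.2.2, (f p + f p.swap) +
        ∑ p ∈ mulAddMulAntidiagonal n with p.1.2 < p.2.2,
          ((p.1.1 : ℚ) * p.2.1 + p.swap.1.1 * p.swap.2.1) := by
    rw [← sum_add_distrib]
    refine sum_congr rfl fun p _ => ?_
    simp only [f, Prod.fst_swap, Prod.snd_swap]
    push_cast
    ring
  have hdiag_fst : ∑ p ∈ mulAddMulAntidiagonal n with p.1.1 = p.2.1, f p =
      ∑ e ∈ n.divisors, ((n : ℚ) * e - e ^ 2) / 2 := by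
    rw [sum_filter_fst_eq, ← Nat.sum_divisorsAntidiagonal fun e _ => ((n : ℚ) * e - e ^ 2) / 2]
    refine sum_congr rfl fun u hu => ?_
    obtain ⟨hmul, hn⟩ := Nat.mem_divisorsAntidiagonal.mp hu
    have hpos : 1 ≤ u.2 := Nat.one_le_iff_ne_zero.mpr (right_ne_zero_of_mul (hmul ▸ hn))
    simp only [f, sum_const, Nat.card_Ioo, nsmul_eq_mul, Nat.sub_zero, Nat.cast_sub hpos, ← hmul]
    push_cast
    ring
  have hdiag_snd : ∑ p ∈ mulAddMulAntidiagonal n with p.1.2 = p.2.2, f p +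
      ∑ p ∈ mulAddMulAntidiagonal n with p.1.2 = p.2.2, (p.1.1 : ℚ) * p.2.1 =
      ∑ e ∈ n.divisors, (e : ℚ) * (e - 1) * (5 * e - 1) / 12 := by
    rw [← sum_add_distrib, sum_filter_snd_eq,
      ← Nat.sum_divisorsAntidiagonal' fun _ e => (e : ℚ) * (e - 1) * (5 * e - 1) / 12]
    refine sum_congr rfl fun u _ => ?_
    rw [← sum_Ioo_sq_add_mul_sub_div_two]
    refine sum_congr rfl fun a _ => ?_
    simp only [f]
    ring
  have hdivisors : ∑ e ∈ n.divisors, (e : ℚ) * (e - 1) * (5 * e - 1) / 12 -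
      ∑ e ∈ n.divisors, ((n : ℚ) * e - e ^ 2) / 2 =
      ∑ e ∈ n.divisors, ((5 * (e : ℚ) ^ 3 + e) / 12 - n * e / 2) := by
    rw [← sum_sub_distrib]
    exact sum_congr rfl fun e _ => by ring
  rw [hsplit]
  linear_combination hliouville - hcross + hdiag_snd - hdiag_fst + hdivisors

theorem sum_sq_mul_mul (n : ℕ) :
    ∑ p ∈ mulAddMulAntidiagonal n, (p.1.1 : ℚ) ^ 2 * p.1.2 * p.2.1 =
      n / 2 * ∑ p ∈ mulAddMulAntidiagonal n, (p.1.1 : ℚ) * p.2.1 := by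
  have hswap : ∑ p ∈ mulAddMulAntidiagonal n, (p.2.1 : ℚ) ^ 2 * p.2.2 * p.1.1 =
      ∑ p ∈ mulAddMulAntidiagonal n, (p.1.1 : ℚ) ^ 2 * p.1.2 * p.2.1 :=
    sum_comp_of_involutive Prod.swap Prod.swap_swap (fun _ => swap_mem)
      fun p => (p.1.1 : ℚ) ^ 2 * p.1.2 * p.2.1
  have hsum : ∑ p ∈ mulAddMulAntidiagonal n,
      ((p.1.1 : ℚ) ^ 2 * p.1.2 * p.2.1 + (p.2.1 : ℚ) ^ 2 * p.2.2 * p.1.1) =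
      n * ∑ p ∈ mulAddMulAntidiagonal n, (p.1.1 : ℚ) * p.2.1 := by
    rw [mul_sum]
    refine sum_congr rfl fun ⟨⟨a, x⟩, b, y⟩ hp => ?_
    obtain ⟨-, -, -, -, rfl⟩ := mem_mulAddMulAntidiagonal.mp hp
    push_cast
    ring
  rw [sum_add_distrib] at hsum
  linear_combination hsum / 2 - hswap / 2

end mulAddMulAntidiagonal

theorem sum_mul_sigmaQ_mul_sigmaQ (n : ℕ) :
    ∑ m ∈ Ioo 0 n, (m : ℚ) * sigmaQ 1 m * sigmaQ 1 (n - m) =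
      ∑ p ∈ mulAddMulAntidiagonal n, (p.1.1 : ℚ) ^ 2 * p.1.2 * p.2.1 := by
  rw [mulAddMulAntidiagonal.sum_eq_sum_sum_sum]
  refine sum_congr rfl fun m _ => ?_
  rw [← sum_divisorsAntidiagonal_sq_mul_eq_mul_sigmaQ, ← sum_divisorsAntidiagonal_fst_eq_sigmaQ,
    sum_mul_sum]

theorem convolution_sigma1_weighted_general (d : ℕ) :
    ∑ d₁ ∈ Finset.Ioo 0 d, (d₁ : ℚ) * sigmaQ 1 d₁ * sigmaQ 1 (d - d₁) =
      (-(d : ℚ) ^ 2 / 4 + (d : ℚ) / 24) * sigmaQ 1 d + (5 / 24) * (d : ℚ) * sigmaQ 3 d := by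
  rw [sum_mul_sigmaQ_mul_sigmaQ, mulAddMulAntidiagonal.sum_sq_mul_mul,
    mulAddMulAntidiagonal.sum_fst_fst_mul_snd_fst, sigmaQ, sigmaQ, mul_sum, mul_sum, mul_sum,
    ← sum_add_distrib]
  exact sum_congr rfl fun e _ => by ring

/-- `∑_{d₁+d₂=d, d₁,d₂≥1} d₁·σ₁(d₁)σ₁(d₂) = (-d²/4 + d/24)·σ₁(d) + (5/24)·d·σ₃(d)`. -/
theorem convolution_sigma1_weighted (d : ℕ) (hd : 0 < d) :
    ∑ d₁ ∈ Finset.Ioo 0 d, (d₁ : ℚ) * sigmaQ 1 d₁ * sigmaQ 1 (d - d₁) =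
      (-(d : ℚ) ^ 2 / 4 + (d : ℚ) / 24) * sigmaQ 1 d + (5 / 24) * (d : ℚ) * sigmaQ 3 d :=
  convolution_sigma1_weighted_general d
end
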